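/- arXiv:2106.15766 — 2 statements merged into one kernel-verified Lean document; each statement's English description precedes it below -/
import Mathlib

section
/- Consider the one-dimensional operator M u(z) = (α z² + ρ) u''(z) + β z u'(z) on (0,∞), with constants α, ρ > 0 and β ∈ ℝ. If α ≥ β, then every bounded solution u ∈ C²((0,∞)) ∩ C([0,∞)) of M u = 0 with u(0) = f₀ is constant equal to f₀; in particular lim_{z→∞} u(z) = f₀. -/
/-- One-dimensional version of Lemma 2.2(a) (attracting or neutral case α ≥ β):
every bounded solution of (αz² + ρ)u'' + βz u' = 0 on (0,∞), continuous up to 0 with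
u(0) = f₀, is constant equal to f₀; in particular u(z) → f₀ as z → ∞. -/
theorem stmt10 (α ρ β f₀ : ℝ) (hα : 0 < α) (hρ : 0 < ρ) (hβ : β ≤ α)
    (u : ℝ → ℝ) (hu2 : ContDiffOn ℝ 2 u (Set.Ioi 0)) (huc : ContinuousOn u (Set.Ici 0))
    (hbdd : ∃ C, ∀ z ≥ (0 : ℝ), |u z| ≤ C)
    (heq : ∀ z > (0 : ℝ), (α * z ^ 2 + ρ) * deriv (deriv u) z + β * z * deriv u z = 0)
    (h0 : u 0 = f₀) :
    (∀ z ≥ (0 : ℝ), u z = f₀) ∧ Filter.Tendsto u Filter.atTop (nhds f₀) := by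
  obtain ⟨C, hC⟩ := hbdd
  have hopen : IsOpen (Set.Ioi (0:ℝ)) := isOpen_Ioi
  set v := deriv u with hvdef
  have hv1 : ContDiffOn ℝ 1 v (Set.Ioi 0) := hu2.deriv_of_isOpen hopen (by norm_num)
  have hvdiff : ∀ z ∈ Set.Ioi (0:ℝ), DifferentiableAt ℝ v z := fun z hz =>
    ((hv1.differentiableOn (by norm_num)) z hz).differentiableAt (hopen.mem_nhds hz)
  have hudiff : ∀ z ∈ Set.Ioi (0:ℝ), DifferentiableAt ℝ u z := fun z hz =>
    ((hu2.differentiableOn (by norm_num)) z hz).differentiableAt (hopen.mem_nhds hz)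
  have hvcont : ContinuousOn v (Set.Ioi 0) := hv1.continuousOn
  set p := β / (2*α) with hpdef
  set W : ℝ → ℝ := fun z => Real.exp (p * Real.log (α*z^2+ρ)) with hWdef
  have hWpos : ∀ z, 0 < W z := fun z => Real.exp_pos _
  have hq : ∀ z : ℝ, (0:ℝ) < α*z^2+ρ := fun z => by positivity
  have hWd : ∀ z, HasDerivAt W (W z * (p * (2*α*z)/(α*z^2+ρ))) z := by
    intro z
    have hg : HasDerivAt (fun z : ℝ => α*z^2+ρ) (2*α*z) z := by
      have := ((hasDerivAt_pow 2 z).const_mul α).add_const ρ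
      simpa [mul_comm, mul_assoc, mul_left_comm] using this
    have hlog : HasDerivAt (fun z : ℝ => Real.log (α*z^2+ρ)) ((2*α*z)/(α*z^2+ρ)) z :=
      hg.log (hq z).ne'
    simpa [mul_div_assoc] using (hlog.const_mul p).exp
  -- key: v z * W z is constant on Ioi 0
  have key : ∀ z ∈ Set.Ioi (0:ℝ), v z * W z = v 1 * W 1 := by
    have hFd : ∀ z ∈ Set.Ioi (0:ℝ), HasDerivAt (fun z => v z * W z) 0 z := by
      intro z hz
      have h1 : HasDerivAt v (deriv v z) z := (hvdiff z hz).hasDerivAt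
      have h2 := h1.mul (hWd z)
      have hzpos : (0:ℝ) < z := hz
      have hderiv : deriv v z * W z + v z * (W z * (p * (2*α*z)/(α*z^2+ρ))) = 0 := by
        have h3 := heq z hzpos
        have hp2 : p * (2*α*z) = β * z := by
          rw [hpdef, div_mul_eq_mul_div, div_eq_iff (by positivity)]; ring
        rw [hp2]
        field_simp
        rw [show W z * (deriv v z * (z^2*α+ρ) + v z * β * z)
            = W z * ((α*z^2+ρ) * deriv (deriv u) z + β * z * deriv u z) by rw [hvdef]; ring, h3,
          mul_zero, mul_zero]
      rw [← hderiv]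
      exact h2
    intro z hz
    exact (convex_Ioi (0:ℝ)).is_const_of_fderivWithin_eq_zero
      (fun x hx => (hFd x hx).differentiableAt.differentiableWithinAt)
      (fun x hx => by
        rw [fderivWithin_of_isOpen hopen hx, (hFd x hx).hasFDerivAt.fderiv]
        ext; simp)
      hz (by norm_num : (1:ℝ) ∈ Set.Ioi (0:ℝ))
  set A := v 1 * W 1 with hAdef
  have hvA : ∀ z ∈ Set.Ioi (0:ℝ), v z = A * (W z)⁻¹ := by
    intro z hz
    field_simp [(hWpos z).ne']
    exact key z hz
  by_cases hA : A = 0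
  · -- v = 0 on Ioi 0, u constant
    have hv0 : ∀ z ∈ Set.Ioi (0:ℝ), v z = 0 := fun z hz => by
      rw [hvA z hz, hA, zero_mul]
    have huconst : ∀ z ∈ Set.Ioi (0:ℝ), u z = u 1 := by
      intro z hz
      exact (convex_Ioi (0:ℝ)).is_const_of_fderivWithin_eq_zero
        (fun x hx => (hudiff x hx).differentiableWithinAt)
        (fun x hx => by
          rw [fderivWithin_of_isOpen hopen hx]
          have hd : HasDerivAt u 0 x := by
            have := (hudiff x hx).hasDerivAt
            rwa [show deriv u x = 0 from hv0 x hx] at this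
          rw [hd.hasFDerivAt.fderiv]; ext; simp)
        hz (by norm_num : (1:ℝ) ∈ Set.Ioi (0:ℝ))
    have h01 : u 1 = f₀ := by
      have hcw : ContinuousWithinAt u (Set.Ici 0) 0 := huc 0 Set.self_mem_Ici
      have ht1 : Filter.Tendsto u (nhdsWithin 0 (Set.Ioi 0)) (nhds (u 0)) :=
        hcw.tendsto.mono_left (nhdsWithin_mono 0 Set.Ioi_subset_Ici_self)
      have ht2 : Filter.Tendsto u (nhdsWithin 0 (Set.Ioi 0)) (nhds (u 1)) := by
        apply Filter.Tendsto.congr' _ tendsto_const_nhds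
        filter_upwards [self_mem_nhdsWithin] with x hx
        exact (huconst x hx).symm
      rw [← h0]
      exact tendsto_nhds_unique ht2 ht1
    constructor
    · intro z hz
      rcases eq_or_lt_of_le hz with h | h
      · rw [← h]; exact h0
      · rw [huconst z h, h01]
    · apply Filter.Tendsto.congr' _ (tendsto_const_nhds (x := f₀))
      filter_upwards [Filter.eventually_gt_atTop 0] with z hz
      rw [huconst z hz, h01]
  · -- contradiction with boundedness
    exfalso
    obtain ⟨c, hc, hcW⟩ : ∃ c > 0, ∀ t ≥ (1:ℝ), W t ≤ t / c := by
      by_cases hp : 0 ≤ p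
      · refine ⟨Real.exp (-(p * Real.log (α+ρ))), Real.exp_pos _, fun t ht => ?_⟩
        have ht0 : (0:ℝ) < t := lt_of_lt_of_le one_pos ht
        have h1 : α*t^2+ρ ≤ (α+ρ)*t^2 := by
          nlinarith [mul_nonneg (mul_nonneg hρ.le (by linarith : (0:ℝ) ≤ t - 1))
            (by linarith : (0:ℝ) ≤ t + 1)]
        have h2 : Real.log (α*t^2+ρ) ≤ Real.log (α+ρ) + 2 * Real.log t := by
          calc Real.log (α*t^2+ρ) ≤ Real.log ((α+ρ)*t^2) := Real.log_le_log (hq t) h1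
            _ = Real.log (α+ρ) + 2 * Real.log t := by
                rw [Real.log_mul (by positivity) (by positivity), Real.log_pow]; push_cast; ring
        have hp2 : 2 * p ≤ 1 := by
          have he : 2 * p = β / α := by rw [hpdef]; field_simp
          rw [he, div_le_one hα]; exact hβ
        have hlt : 0 ≤ Real.log t := Real.log_nonneg ht
        calc W t = Real.exp (p * Real.log (α*t^2+ρ)) := rfl
          _ ≤ Real.exp (Real.log t + p * Real.log (α+ρ)) := by
              apply Real.exp_le_exp.mpr
              nlinarith [mul_le_mul_of_nonneg_left h2 hp, mul_le_mul_of_nonneg_right hp2 hlt]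
          _ = t / Real.exp (-(p * Real.log (α+ρ))) := by
              rw [Real.exp_neg, div_eq_mul_inv, inv_inv, Real.exp_add, Real.exp_log ht0]
      · push_neg at hp
        refine ⟨Real.exp (-(p * Real.log ρ)), Real.exp_pos _, fun t ht => ?_⟩
        have ht0 : (0:ℝ) < t := lt_of_lt_of_le one_pos ht
        have h2 : Real.log ρ ≤ Real.log (α*t^2+ρ) := Real.log_le_log hρ (by nlinarith)
        have hlt : 0 ≤ Real.log t := Real.log_nonneg ht
        calc W t = Real.exp (p * Real.log (α*t^2+ρ)) := rfl
          _ ≤ Real.exp (Real.log t + p * Real.log ρ) := by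
              apply Real.exp_le_exp.mpr
              nlinarith [mul_le_mul_of_nonpos_left h2 hp.le]
          _ = t / Real.exp (-(p * Real.log ρ)) := by
              rw [Real.exp_neg, div_eq_mul_inv, inv_inv, Real.exp_add, Real.exp_log ht0]
    have hmain : ∀ z ≥ (1:ℝ), |A| * (c * Real.log z) ≤ 2 * C := by
      intro z hz
      have hsub : Set.uIcc (1:ℝ) z ⊆ Set.Ioi 0 := by
        rw [Set.uIcc_of_le hz]
        intro t ht; exact lt_of_lt_of_le one_pos ht.1
      have hint : IntervalIntegrable (fun t => (W t)⁻¹) MeasureTheory.volume 1 z := by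
        apply ContinuousOn.intervalIntegrable
        exact (Real.continuous_exp.comp ((continuous_const.mul
          (((continuous_const.mul (continuous_pow 2)).add continuous_const).log
            (fun x => (hq x).ne')))) ).continuousOn.inv₀ (fun x _ => (hWpos x).ne')
      have hftc : u z - u 1 = ∫ t in (1:ℝ)..z, v t := by
        rw [intervalIntegral.integral_eq_sub_of_hasDerivAt
          (fun t ht => (hudiff t (hsub ht)).hasDerivAt)
          ((hvcont.mono hsub).intervalIntegrable)]
      have hcong : (∫ t in (1:ℝ)..z, v t) = A * ∫ t in (1:ℝ)..z, (W t)⁻¹ := by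
        rw [← intervalIntegral.integral_const_mul]
        exact intervalIntegral.integral_congr (fun t ht => hvA t (hsub ht))
      have hI : c * Real.log z ≤ ∫ t in (1:ℝ)..z, (W t)⁻¹ := by
        have hz0 : (0:ℝ) ∉ Set.uIcc 1 z := fun h => lt_irrefl (0:ℝ) (hsub h)
        have hIlow : (∫ t in (1:ℝ)..z, c * t⁻¹) = c * Real.log z := by
          rw [intervalIntegral.integral_const_mul, integral_inv hz0, div_one]
        rw [← hIlow]
        apply intervalIntegral.integral_mono_on hz
        · apply ContinuousOn.intervalIntegrable
          exact continuousOn_const.mul (continuousOn_inv₀.mono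
            (fun t ht => ne_of_gt (hsub ht)))
        · exact hint
        · intro t ht
          have ht1 : (1:ℝ) ≤ t := ht.1
          have ht0 : (0:ℝ) < t := lt_of_lt_of_le one_pos ht1
          have h1 : (t / c)⁻¹ ≤ (W t)⁻¹ :=
            inv_anti₀ (hWpos t) (hcW t ht1)
          calc c * t⁻¹ = (t/c)⁻¹ := by field_simp
            _ ≤ (W t)⁻¹ := h1
      have hIpos : 0 ≤ ∫ t in (1:ℝ)..z, (W t)⁻¹ := by
        refine le_trans ?_ hI
        have := Real.log_nonneg hz
        positivity
      have habs : |A| * (∫ t in (1:ℝ)..z, (W t)⁻¹) ≤ 2 * C := by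
        have heqabs : |u z - u 1| = |A| * (∫ t in (1:ℝ)..z, (W t)⁻¹) := by
          rw [hftc, hcong, abs_mul, abs_of_nonneg hIpos]
        rw [← heqabs]
        have b1 := hC z (by linarith)
        have b2 := hC 1 (by norm_num)
        calc |u z - u 1| ≤ |u z| + |u 1| := abs_sub _ _
          _ ≤ 2 * C := by linarith
      calc |A| * (c * Real.log z) ≤ |A| * (∫ t in (1:ℝ)..z, (W t)⁻¹) :=
            mul_le_mul_of_nonneg_left hI (abs_nonneg A)
        _ ≤ 2 * C := habs
    have hApos : 0 < |A| := abs_pos.mpr hA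
    set z₀ := Real.exp ((2*C+1)/(|A| * c)) with hz₀
    have hz₀1 : (1:ℝ) ≤ z₀ := by
      have hC0 : 0 ≤ C := le_trans (abs_nonneg _) (hC 0 le_rfl)
      exact Real.one_le_exp (div_nonneg (by linarith) (by positivity))
    have h1 := hmain z₀ hz₀1
    rw [hz₀, Real.log_exp] at h1
    have h2 : |A| * (c * ((2*C+1)/(|A| * c))) = 2*C+1 := by
      field_simp
    linarith
end

section
/- Let u ∈ C²((0,∞)) be bounded and satisfy (α z² + ρ(z)) u''(z) + β z u'(z) = 0 where ρ is continuous with 0 < ρ_min ≤ ρ(z) ≤ ρ_max, α > 0, and β ≤ α. Then u is constant. -/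
open MeasureTheory intervalIntegral Set

lemma const_on_Ioi' {w : ℝ → ℝ} (hw : ∀ z ∈ Set.Ioi (0:ℝ), HasDerivAt w 0 z) :
    ∀ a > (0:ℝ), ∀ b > (0:ℝ), w a = w b := by
  have key : ∀ a > (0:ℝ), ∀ b, a ≤ b → w b = w a := by
    intro a ha b hab
    have hsub : Set.Icc a b ⊆ Set.Ioi (0:ℝ) := fun x hx => lt_of_lt_of_le ha hx.1
    have := constant_of_has_deriv_right_zero (f := w) (a := a) (b := b)
      (fun x hx => ((hw x (hsub hx)).continuousAt).continuousWithinAt)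
      (fun x hx => ((hw x (hsub (Set.mem_Icc_of_Ico hx))).hasDerivWithinAt))
    exact this b (Set.mem_Icc.2 ⟨hab, le_refl b⟩)
  intro a ha b hb
  rcases le_total a b with h | h
  · exact (key a ha b h).symm
  · exact key b hb a h


/-- Liouville-type theorem (attracting/neutral case of Lemma 2.2 with non-constant
regularization ρ(z)): bounded C² solutions of (αz² + ρ(z))u'' + βz u' = 0 on (0,∞)
with α > 0, β ≤ α and 0 < ρ_min ≤ ρ ≤ ρ_max are constant. -/
theorem stmt15 (α β ρmin ρmax : ℝ) (hα : 0 < α) (hβ : β ≤ α)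
    (ρ : ℝ → ℝ) (hρc : Continuous ρ) (hρmin : 0 < ρmin)
    (hρ : ∀ z : ℝ, ρmin ≤ ρ z ∧ ρ z ≤ ρmax)
    (u : ℝ → ℝ) (hu : ContDiffOn ℝ 2 u (Set.Ioi 0))
    (hbdd : ∃ C, ∀ z > (0 : ℝ), |u z| ≤ C)
    (heq : ∀ z > (0 : ℝ), (α * z ^ 2 + ρ z) * deriv (deriv u) z + β * z * deriv u z = 0) :
    ∀ z₁ > (0 : ℝ), ∀ z₂ > (0 : ℝ), u z₁ = u z₂ := by
  obtain ⟨C, hC⟩ := hbdd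
  have hDpos : ∀ z : ℝ, 0 < α * z ^ 2 + ρ z := by
    intro z
    have := (hρ z).1
    nlinarith [sq_nonneg z]
  set D : ℝ → ℝ := fun z => α * z ^ 2 + ρ z with hDdef
  have hDc : Continuous D := by fun_prop
  set f : ℝ → ℝ := fun z => β * z / D z with hfdef
  have hfc : Continuous f := (continuous_const.mul continuous_id).div hDc (fun z => (hDpos z).ne')
  set F : ℝ → ℝ := fun z => ∫ t in (1:ℝ)..z, f t with hFdef
  have hFd : ∀ z : ℝ, HasDerivAt F (f z) z := fun z =>
    (hfc.integral_hasStrictDerivAt 1 z).hasDerivAt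
  have hFc : Continuous F := continuous_iff_continuousAt.2 fun z => (hFd z).continuousAt
  -- differentiability of u and deriv u
  have hud : DifferentiableOn ℝ u (Set.Ioi 0) := hu.differentiableOn (by norm_num)
  have hvcd : ContDiffOn ℝ 1 (deriv u) (Set.Ioi 0) :=
    hu.deriv_of_isOpen isOpen_Ioi (by norm_num)
  have hvdiff : ∀ z ∈ Set.Ioi (0:ℝ), HasDerivAt (deriv u) (deriv (deriv u) z) z := by
    intro z hz
    exact ((hvcd.differentiableOn (by norm_num)).differentiableAt
      (isOpen_Ioi.mem_nhds hz)).hasDerivAt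
  -- the second-order equation rewritten
  have hde : ∀ z ∈ Set.Ioi (0:ℝ), deriv (deriv u) z = -(f z * deriv u z) := by
    intro z hz
    have h := heq z hz
    have hne : D z ≠ 0 := (hDpos z).ne'
    show deriv (deriv u) z = -(β * z / D z * deriv u z)
    field_simp
    linear_combination h
  -- constancy of w z = u'(z) exp(F z)
  set c : ℝ := deriv u 1 with hcdef
  have hwconst : ∀ z > (0:ℝ), deriv u z * Real.exp (F z) = c := by
    have hw : ∀ z ∈ Set.Ioi (0:ℝ),
        HasDerivAt (fun z => deriv u z * Real.exp (F z)) 0 z := by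
      intro z hz
      have h1 := (hvdiff z hz).mul ((hFd z).exp)
      have h2 : deriv (deriv u) z * Real.exp (F z)
          + deriv u z * (Real.exp (F z) * f z) = 0 := by
        rw [hde z hz]; ring
      rwa [h2] at h1
    intro z hz
    have := const_on_Ioi' hw z hz 1 one_pos
    simpa [hFdef, intervalIntegral.integral_same] using this
  have hFone : F 1 = 0 := intervalIntegral.integral_same
  have hderiv_u : ∀ z > (0:ℝ), deriv u z = c * Real.exp (-F z) := by
    intro z hz
    have h := hwconst z hz
    have : deriv u z = c / Real.exp (F z) :=
      (eq_div_iff (Real.exp_ne_zero _)).2 h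
    rw [this, Real.exp_neg]
    ring
  -- case c = 0 gives the result; c ≠ 0 contradicts boundedness
  have hc0 : c = 0 := by
    by_contra hc
    have hCpos : 0 ≤ C := le_trans (abs_nonneg _) (hC 1 one_pos)
    -- bound F z ≤ log z for z ≥ 1
    have hFle : ∀ z ≥ (1:ℝ), F z ≤ Real.log z := by
      intro z hz1
      have hle : ∀ t ∈ Set.Icc (1:ℝ) z, f t ≤ 1 / t := by
        intro t ht
        have ht0 : 0 < t := lt_of_lt_of_le one_pos ht.1
        rw [hfdef]
        rw [div_le_div_iff₀ (hDpos t) ht0]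
        have : β * t * t ≤ α * t ^ 2 := by nlinarith
        have := (hρ t).1
        nlinarith
      have hint1 : IntervalIntegrable f volume 1 z := hfc.intervalIntegrable _ _
      have hint2 : IntervalIntegrable (fun t => 1 / t) volume 1 z := by
        apply ContinuousOn.intervalIntegrable
        apply ContinuousOn.div continuousOn_const continuousOn_id
        intro t ht
        rw [Set.uIcc_of_le hz1] at ht
        exact ne_of_gt (lt_of_lt_of_le one_pos ht.1)
      calc F z ≤ ∫ t in (1:ℝ)..z, 1 / t :=
            intervalIntegral.integral_mono_on hz1 hint1 hint2 hle
        _ = Real.log z := by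
            rw [integral_one_div_of_pos one_pos (lt_of_lt_of_le one_pos hz1)]
            simp
    -- FTC: u z - u 1 = c * ∫₁^z exp(-F t)
    have hkey : ∀ z ≥ (1:ℝ), u z - u 1 = c * ∫ t in (1:ℝ)..z, Real.exp (-F t) := by
      intro z hz1
      have hgc : Continuous fun t => c * Real.exp (-F t) := by fun_prop
      have hFTC : ∫ t in (1:ℝ)..z, c * Real.exp (-F t) = u z - u 1 := by
        apply intervalIntegral.integral_eq_sub_of_hasDerivAt
        · intro x hx
          rw [Set.uIcc_of_le hz1] at hx
          have hx0 : (0:ℝ) < x := lt_of_lt_of_le one_pos hx.1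
          have hdx : HasDerivAt u (deriv u x) x :=
            (hud.differentiableAt (isOpen_Ioi.mem_nhds hx0)).hasDerivAt
          rwa [hderiv_u x hx0] at hdx
        · exact hgc.intervalIntegrable _ _
      rw [← hFTC, intervalIntegral.integral_const_mul]
    -- lower bound on the integral
    have hIge : ∀ z ≥ (1:ℝ), Real.log z ≤ ∫ t in (1:ℝ)..z, Real.exp (-F t) := by
      intro z hz1
      have hle : ∀ t ∈ Set.Icc (1:ℝ) z, 1 / t ≤ Real.exp (-F t) := by
        intro t ht
        have ht0 : 0 < t := lt_of_lt_of_le one_pos ht.1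
        have : Real.exp (-Real.log t) ≤ Real.exp (-F t) :=
          Real.exp_le_exp.2 (neg_le_neg (hFle t ht.1))
        rwa [Real.exp_neg, Real.exp_log ht0, ← one_div] at this
      have hint1 : IntervalIntegrable (fun t => 1 / t) volume 1 z := by
        apply ContinuousOn.intervalIntegrable
        apply ContinuousOn.div continuousOn_const continuousOn_id
        intro t ht
        rw [Set.uIcc_of_le hz1] at ht
        exact ne_of_gt (lt_of_lt_of_le one_pos ht.1)
      have hint2 : IntervalIntegrable (fun t => Real.exp (-F t)) volume 1 z := by
        apply Continuous.intervalIntegrable; fun_prop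
      calc Real.log z = ∫ t in (1:ℝ)..z, 1 / t := by
            rw [integral_one_div_of_pos one_pos (lt_of_lt_of_le one_pos hz1)]; simp
        _ ≤ _ := intervalIntegral.integral_mono_on hz1 hint1 hint2 hle
    -- choose z large
    set z : ℝ := Real.exp ((2 * C + 1) / |c|) with hzdef
    have hcabs : 0 < |c| := abs_pos.2 hc
    have hz1 : (1:ℝ) ≤ z := by
      rw [hzdef]
      apply Real.one_le_exp
      positivity
    have hlogz : Real.log z = (2 * C + 1) / |c| := Real.log_exp _
    have h1 := hkey z hz1
    have h2 := hIge z hz1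
    have hIpos : 0 ≤ ∫ t in (1:ℝ)..z, Real.exp (-F t) :=
      le_trans (Real.log_nonneg hz1) h2
    have habs : |u z - u 1| = |c| * ∫ t in (1:ℝ)..z, Real.exp (-F t) := by
      rw [h1, abs_mul, abs_of_nonneg hIpos]
    have hub : |u z - u 1| ≤ 2 * C := by
      have h3 := hC z (lt_of_lt_of_le one_pos hz1)
      have h4 := hC 1 one_pos
      calc |u z - u 1| ≤ |u z| + |u 1| := abs_sub _ _
        _ ≤ 2 * C := by linarith
    have hlb : 2 * C + 1 ≤ |u z - u 1| := by
      rw [habs]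
      calc 2 * C + 1 = |c| * ((2 * C + 1) / |c|) := by field_simp
        _ = |c| * Real.log z := by rw [hlogz]
        _ ≤ |c| * ∫ t in (1:ℝ)..z, Real.exp (-F t) :=
            mul_le_mul_of_nonneg_left h2 (le_of_lt hcabs)
    linarith
  -- conclude: deriv u = 0 on Ioi 0, hence u is constant
  have hzero : ∀ z ∈ Set.Ioi (0:ℝ), HasDerivAt u 0 z := by
    intro z hz
    have hdx : HasDerivAt u (deriv u z) z :=
      (hud.differentiableAt (isOpen_Ioi.mem_nhds hz)).hasDerivAt
    rwa [hderiv_u z hz, hc0, zero_mul] at hdx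
  intro z₁ hz₁ z₂ hz₂
  exact const_on_Ioi' hzero z₁ hz₁ z₂ hz₂
end
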